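/- arXiv:2502.08571 — 6 statements merged into one kernel-verified Lean document; each statement's English description precedes it below -/
import Mathlib

section
/- Let ι be a finite index set, let ω : ι → ι → ℝ be symmetric (ω z ẑ = ω ẑ z) with vanishing row sums (∑_{ẑ} ω z ẑ = 0 for every z) and with ω z ẑ ≤ 0 whenever z ≠ ẑ. Let d : ι → ℝ^N satisfy ‖d z‖ ≥ 1 for every z. Then ∑_{z, ẑ ∈ ι} ω z ẑ ⟨ d z/‖d z‖ , d ẑ/‖d ẑ‖ ⟩ ≤ ∑_{z, ẑ ∈ ι} ω z ẑ ⟨d z, d ẑ⟩. -/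
open scoped RealInnerProductSpace

private lemma key_scalar (a b t : ℝ) (ha : 1 ≤ a) (hb : 1 ≤ b) (ht : t ≤ a * b) :
    0 ≤ a⁻¹ * (b⁻¹ * t) - t + (2⁻¹ * a ^ 2 + 2⁻¹ * b ^ 2 - 1) := by
  have ha0 : 0 < a := lt_of_lt_of_le one_pos ha
  have hb0 : 0 < b := lt_of_lt_of_le one_pos hb
  have hab : 0 < a * b := mul_pos ha0 hb0
  have h1 : a * b * (a⁻¹ * (b⁻¹ * t)) = t := by field_simp
  have key2 : 0 ≤ a * b * (a⁻¹ * (b⁻¹ * t) - t + (2⁻¹ * a ^ 2 + 2⁻¹ * b ^ 2 - 1)) := by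
    have h2 : 0 ≤ (a * b - t) * (a * b - 1) := by
      apply mul_nonneg (by linarith) (by nlinarith)
    nlinarith [mul_nonneg hab.le (sq_nonneg (a - b))]
  exact nonneg_of_mul_nonneg_right key2 hab

/-- Nodal normalization is energy-decreasing: for symmetric weights `ω` with
vanishing row sums and nonpositive off-diagonal entries, and nodal values `d`
with `‖d z‖ ≥ 1`, the discrete Dirichlet energy of the nodewise normalization
is at most that of `d`. -/
theorem sum_weights_inner_normalize_le
    {ι : Type*} [Fintype ι] (N : ℕ) (ω : ι → ι → ℝ)
    (hsymm : ∀ z z', ω z z' = ω z' z)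
    (hrow : ∀ z, ∑ z', ω z z' = 0)
    (hoff : ∀ z z', z ≠ z' → ω z z' ≤ 0)
    (d : ι → EuclideanSpace ℝ (Fin N))
    (hd : ∀ z, 1 ≤ ‖d z‖) :
    ∑ z, ∑ z', ω z z' * ⟪‖d z‖⁻¹ • d z, ‖d z'‖⁻¹ • d z'⟫
      ≤ ∑ z, ∑ z', ω z z' * ⟪d z, d z'⟫ := by
  have hpos : ∀ z, (0:ℝ) < ‖d z‖ := fun z => lt_of_lt_of_le one_pos (hd z)
  have hinner : ∀ z z', ⟪‖d z‖⁻¹ • d z, ‖d z'‖⁻¹ • d z'⟫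
      = ‖d z‖⁻¹ * (‖d z'‖⁻¹ * ⟪d z, d z'⟫) := by
    intro z z'
    rw [real_inner_smul_left, real_inner_smul_right]
  set h : ι → ι → ℝ := fun z z' =>
    ‖d z‖⁻¹ * (‖d z'‖⁻¹ * ⟪d z, d z'⟫) - ⟪d z, d z'⟫
      + (2⁻¹ * ‖d z‖ ^ 2 + 2⁻¹ * ‖d z'‖ ^ 2 - 1) with hh
  have hzero1 : ∀ g : ι → ℝ, ∑ z, ∑ z', ω z z' * g z = 0 := by
    intro g
    have : ∀ z ∈ Finset.univ, ∑ z', ω z z' * g z = 0 := by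
      intro z _
      rw [← Finset.sum_mul, hrow, zero_mul]
    rw [Finset.sum_congr rfl this, Finset.sum_const_zero]
  have hzero2 : ∀ g : ι → ℝ, ∑ z, ∑ z', ω z z' * g z' = 0 := by
    intro g
    rw [Finset.sum_comm]
    have : ∀ z' ∈ Finset.univ, ∑ z, ω z z' * g z' = 0 := by
      intro z' _
      have : ∑ z, ω z z' = 0 := by
        rw [Finset.sum_congr rfl (fun z _ => hsymm z z'), hrow]
      rw [← Finset.sum_mul, this, zero_mul]
    rw [Finset.sum_congr rfl this, Finset.sum_const_zero]
  have hsplit : ∑ z, ∑ z', ω z z' * ⟪‖d z‖⁻¹ • d z, ‖d z'‖⁻¹ • d z'⟫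
      = ∑ z, ∑ z', ω z z' * ⟪d z, d z'⟫
        + ∑ z, ∑ z', ω z z' * h z z'
        + ∑ z, ∑ z', ω z z' * (2⁻¹ - 2⁻¹ * ‖d z‖ ^ 2)
        + ∑ z, ∑ z', ω z z' * (2⁻¹ - 2⁻¹ * ‖d z'‖ ^ 2) := by
    simp only [← Finset.sum_add_distrib]
    apply Finset.sum_congr rfl
    intro z _
    apply Finset.sum_congr rfl
    intro z' _
    rw [hinner]
    simp only [hh]
    ring
  have hterm : ∀ z z', ω z z' * h z z' ≤ 0 := by
    intro z z'
    by_cases hzz : z = z'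
    · subst hzz
      have : h z z = 0 := by
        simp only [hh, real_inner_self_eq_norm_sq]
        have := (hpos z).ne'
        field_simp
        ring
      rw [this, mul_zero]
    · have h0 : 0 ≤ h z z' := by
        simp only [hh]
        exact key_scalar _ _ _ (hd z) (hd z') (real_inner_le_norm _ _)
      exact mul_nonpos_of_nonpos_of_nonneg (hoff z z' hzz) h0
  have hsum : ∑ z, ∑ z', ω z z' * h z z' ≤ 0 := by
    apply Finset.sum_nonpos
    intro z _
    exact Finset.sum_nonpos fun z' _ => hterm z z'
  rw [hsplit, hzero1 (fun z => 2⁻¹ - 2⁻¹ * ‖d z‖ ^ 2),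
    hzero2 (fun z => 2⁻¹ - 2⁻¹ * ‖d z‖ ^ 2)]
  linarith
end

section
/- Let ι be a finite index set, let ω : ι → ι → ℝ be symmetric with vanishing row sums and ω z ẑ ≤ 0 for z ≠ ẑ, and let d, e : ι → ℝ^N satisfy ‖e z − e ẑ‖ ≤ ‖d z − d ẑ‖ for all z, ẑ ∈ ι. Then ∑_{z, ẑ ∈ ι} ω z ẑ ⟨e z, e ẑ⟩ ≤ ∑_{z, ẑ ∈ ι} ω z ẑ ⟨d z, d ẑ⟩. -/
open scoped RealInnerProductSpace

lemma key_reform {ι : Type*} [Fintype ι] (N : ℕ) (ω : ι → ι → ℝ)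
    (hsymm : ∀ z z', ω z z' = ω z' z)
    (hrow : ∀ z, ∑ z', ω z z' = 0)
    (f : ι → EuclideanSpace ℝ (Fin N)) :
    ∑ z, ∑ z', ω z z' * ⟪f z, f z'⟫
      = -(1/2) * ∑ z, ∑ z', ω z z' * ‖f z - f z'‖^2 := by
  have hnorm : ∀ a b : EuclideanSpace ℝ (Fin N),
      ‖a - b‖^2 = ‖a‖^2 + ‖b‖^2 - 2 * ⟪a, b⟫ := by
    intro a b
    rw [@norm_sub_sq_real]
    ring
  have h1 : ∑ z, ∑ z', ω z z' * ‖f z - f z'‖^2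
      = ∑ z, ∑ z', ω z z' * (‖f z‖^2 + ‖f z'‖^2 - 2 * ⟪f z, f z'⟫) := by
    simp_rw [hnorm]
  rw [h1]
  have h2 : ∀ z, ∑ z', ω z z' * ‖f z‖^2 = 0 := by
    intro z; rw [← Finset.sum_mul, hrow, zero_mul]
  have h3 : ∑ z, ∑ z', ω z z' * ‖f z'‖^2 = 0 := by
    rw [Finset.sum_comm]
    refine Finset.sum_eq_zero fun z' _ => ?_
    have : ∑ z, ω z z' * ‖f z'‖^2 = (∑ z, ω z' z) * ‖f z'‖^2 := by
      rw [Finset.sum_mul]; exact Finset.sum_congr rfl fun z _ => by rw [hsymm]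
    rw [this, hrow, zero_mul]
  simp only [mul_sub, mul_add, Finset.sum_sub_distrib, Finset.sum_add_distrib, h2,
    Finset.sum_const_zero, zero_add]
  rw [h3]
  have h4 : ∑ z, ∑ z', ω z z' * (2 * ⟪f z, f z'⟫)
      = 2 * ∑ z, ∑ z', ω z z' * ⟪f z, f z'⟫ := by
    simp_rw [Finset.mul_sum, mul_left_comm]
  rw [h4]; ring

/-- Abstract energy-decreasing projection mechanism: for symmetric weights `ω`
with vanishing row sums and nonpositive off-diagonal entries, any nodewise
operation `d ↦ e` that does not increase pairwise distances does not increase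
the discrete Dirichlet energy. -/
theorem sum_weights_inner_le_of_dist_le
    {ι : Type*} [Fintype ι] (N : ℕ) (ω : ι → ι → ℝ)
    (hsymm : ∀ z z', ω z z' = ω z' z)
    (hrow : ∀ z, ∑ z', ω z z' = 0)
    (hoff : ∀ z z', z ≠ z' → ω z z' ≤ 0)
    (d e : ι → EuclideanSpace ℝ (Fin N))
    (hde : ∀ z z', ‖e z - e z'‖ ≤ ‖d z - d z'‖) :
    ∑ z, ∑ z', ω z z' * ⟪e z, e z'⟫
      ≤ ∑ z, ∑ z', ω z z' * ⟪d z, d z'⟫ := by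
  rw [key_reform N ω hsymm hrow e, key_reform N ω hsymm hrow d]
  have : ∑ z, ∑ z', ω z z' * ‖d z - d z'‖^2 ≤ ∑ z, ∑ z', ω z z' * ‖e z - e z'‖^2 := by
    refine Finset.sum_le_sum fun z _ => Finset.sum_le_sum fun z' _ => ?_
    by_cases h : z = z'
    · subst h; simp
    · apply mul_le_mul_of_nonpos_left _ (hoff z z' h)
      have h0 := norm_nonneg (e z - e z')
      nlinarith [hde z z']
  nlinarith
end

section
/- Let m, N ∈ ℕ, let a : Fin m → ℝ and n : Fin m → ℝ^N satisfy ∑_{i} a i • n i = 0, and let d : Fin m → ℝ^N. Then ‖ ∑_{i} a i • (d i ⊗ n i) ‖_F² = −(1/2) ∑_{i, j} (a i)(a j) ⟨n i, n j⟩ ‖d i − d j‖². -/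
open scoped RealInnerProductSpace

private lemma comm4' {α : Type*} [AddCommMonoid α] {p q r s : ℕ}
    (f : Fin p → Fin q → Fin r → Fin s → α) :
    ∑ k, ∑ l, ∑ i, ∑ j, f k l i j = ∑ i, ∑ j, ∑ k, ∑ l, f k l i j :=
  calc ∑ k, ∑ l, ∑ i, ∑ j, f k l i j
      = ∑ k, ∑ i, ∑ l, ∑ j, f k l i j :=
        Finset.sum_congr rfl fun _ _ => Finset.sum_comm
    _ = ∑ i, ∑ k, ∑ l, ∑ j, f k l i j := Finset.sum_comm
    _ = ∑ i, ∑ k, ∑ j, ∑ l, f k l i j :=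
        Finset.sum_congr rfl fun _ _ => Finset.sum_congr rfl fun _ _ => Finset.sum_comm
    _ = ∑ i, ∑ j, ∑ k, ∑ l, f k l i j :=
        Finset.sum_congr rfl fun _ _ => Finset.sum_comm

private lemma key_alg {m : ℕ} (a : Fin m → ℝ) (S D : Fin m → Fin m → ℝ)
    (hS : ∀ i j, S i j = S j i)
    (hz : ∀ i, ∑ j, a j * S i j = 0) :
    ∑ i, ∑ j, a i * a j * D i j * S i j
      = -(1/2) * ∑ i, ∑ j, a i * a j * S i j * (D i i + D j j - 2 * D i j) := by
  have h1 : ∑ i, ∑ j, a i * a j * S i j * D i i = 0 := by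
    have : ∀ i, ∑ j, a i * a j * S i j * D i i = (a i * D i i) * ∑ j, a j * S i j := by
      intro i; rw [Finset.mul_sum]; exact Finset.sum_congr rfl fun j _ => by ring
    simp [this, hz]
  have h2 : ∑ i, ∑ j, a i * a j * S i j * D j j = 0 := by
    rw [Finset.sum_comm]
    have : ∀ j, ∑ i, a i * a j * S i j * D j j = (a j * D j j) * ∑ i, a i * S j i := by
      intro j; rw [Finset.mul_sum]; exact Finset.sum_congr rfl fun i _ => by rw [hS i j]; ring
    simp [this, hz]
  have expand : ∑ i, ∑ j, a i * a j * S i j * (D i i + D j j - 2 * D i j)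
      = (∑ i, ∑ j, a i * a j * S i j * D i i) + (∑ i, ∑ j, a i * a j * S i j * D j j)
        - 2 * ∑ i, ∑ j, a i * a j * D i j * S i j := by
    simp only [Finset.mul_sum, ← Finset.sum_add_distrib, ← Finset.sum_sub_distrib]
    exact Finset.sum_congr rfl fun i _ => Finset.sum_congr rfl fun j _ => by ring
  rw [expand, h1, h2]; ring

/-- Key identity for the reconstructed gradient: if `∑ i, a i • n i = 0`, then
the squared Frobenius norm of `∑ i, a i • (d i ⊗ n i)` equals
`-(1/2) ∑ i j, a i * a j * ⟨n i, n j⟩ * ‖d i - d j‖²`. -/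
theorem frobenius_sq_sum_smul_outer
    (m N : ℕ) (a : Fin m → ℝ) (n : Fin m → EuclideanSpace ℝ (Fin N))
    (hn : ∑ i, a i • n i = 0) (d : Fin m → EuclideanSpace ℝ (Fin N)) :
    (∑ k, ∑ l, ((∑ i, a i • (Matrix.of fun p q => d i p * n i q)) k l) ^ 2)
      = -(1/2) * ∑ i, ∑ j, a i * a j * ⟪n i, n j⟫ * ‖d i - d j‖ ^ 2 := by
  have hz : ∀ i, ∑ j, a j * ⟪n i, n j⟫ = 0 := by
    intro i
    have : ⟪n i, ∑ j, a j • n j⟫ = (0 : ℝ) := by rw [hn, inner_zero_right]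
    rw [inner_sum] at this
    simp only [real_inner_smul_right] at this
    simpa [mul_comm] using this
  have lhs : (∑ k, ∑ l, ((∑ i, a i • (Matrix.of fun p q => d i p * n i q)) k l) ^ 2)
      = ∑ i, ∑ j, a i * a j * ⟪d i, d j⟫ * ⟪n i, n j⟫ := by
    simp only [Matrix.sum_apply, Matrix.smul_apply, Matrix.of_apply, smul_eq_mul, sq,
      Finset.sum_mul_sum, PiLp.inner_apply, RCLike.inner_apply, conj_trivial]
    rw [comm4' (fun k l i j => (a i * (d i k * n i l)) * (a j * (d j k * n j l)))]
    refine Finset.sum_congr rfl fun i _ => Finset.sum_congr rfl fun j _ => ?_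
    simp only [Finset.mul_sum, Finset.sum_mul]
    rw [Finset.sum_comm]
    exact Finset.sum_congr rfl fun k _ => Finset.sum_congr rfl fun l _ => by ring
  have hnorm : ∀ i j, ‖d i - d j‖ ^ 2
      = ⟪d i, d i⟫ + ⟪d j, d j⟫ - 2 * ⟪d i, d j⟫ := by
    intro i j
    rw [@norm_sub_sq_real, real_inner_self_eq_norm_sq, real_inner_self_eq_norm_sq]
    ring
  rw [lhs]
  calc ∑ i, ∑ j, a i * a j * ⟪d i, d j⟫ * ⟪n i, n j⟫
      = -(1/2) * ∑ i, ∑ j, a i * a j * ⟪n i, n j⟫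
          * (⟪d i, d i⟫ + ⟪d j, d j⟫ - 2 * ⟪d i, d j⟫) :=
        key_alg a (fun i j => ⟪n i, n j⟫) (fun i j => ⟪d i, d j⟫)
          (fun i j => real_inner_comm _ _) hz
    _ = -(1/2) * ∑ i, ∑ j, a i * a j * ⟪n i, n j⟫ * ‖d i - d j‖ ^ 2 := by
        congr 1
        exact Finset.sum_congr rfl fun i _ => Finset.sum_congr rfl fun j _ => by
          rw [hnorm i j]
end

section
/- Let m, N ∈ ℕ, let a : Fin m → ℝ with a i ≥ 0 for all i, and let n : Fin m → ℝ^N satisfy ∑_{i} a i • n i = 0 and ⟨n i, n j⟩ ≤ 0 for all i ≠ j. Let d, e : Fin m → ℝ^N satisfy ‖e i − e j‖ ≤ ‖d i − d j‖ for all i, j. Then ‖ ∑_{i} a i • (e i ⊗ n i) ‖_F ≤ ‖ ∑_{i} a i • (d i ⊗ n i) ‖_F. -/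
/-!
Writing `c i j = a i * a j * ⟪n i, n j⟫`, the squared Frobenius norm of `∑ i, a i • (x i ⊗ n i)`
is the quadratic form `∑ i j, c i j * ⟪x i, x j⟫`. Since `∑ j, a j • n j = 0`, the symmetric
matrix `c` has zero row sums, so this form equals `-(∑ i j, c i j * ‖x i - x j‖ ^ 2) / 2`. The
off-diagonal entries of `c` are nonpositive, hence the form can only grow with the pairwise
distances of the `x i`.
-/

open scoped RealInnerProductSpace

/-- The Frobenius norm of a real `N × N` matrix. -/
noncomputable def frobeniusNorm {N : ℕ} (A : Matrix (Fin N) (Fin N) ℝ) : ℝ :=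
  Real.sqrt (∑ k, ∑ l, (A k l) ^ 2)

section QuadraticForm

variable {ι : Type*} [Fintype ι]

theorem sum_sum_mul_inner_eq_neg_half_sum_sum_mul_norm_sub_sq
    {E : Type*} [NormedAddCommGroup E] [InnerProductSpace ℝ E]
    (c : ι → ι → ℝ) (hc : ∀ i j, c i j = c j i) (hrow : ∀ i, ∑ j, c i j = 0) (x : ι → E) :
    ∑ i, ∑ j, c i j * ⟪x i, x j⟫ = -(∑ i, ∑ j, c i j * ‖x i - x j‖ ^ 2) / 2 := by
  have hleft : ∑ i, ∑ j, c i j * ‖x i‖ ^ 2 = 0 := by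
    simp [← Finset.sum_mul, hrow]
  have hright : ∑ i, ∑ j, c i j * ‖x j‖ ^ 2 = 0 := by
    rw [Finset.sum_comm]
    simp [← Finset.sum_mul, hc _ _, hrow]
  have hsplit : ∑ i, ∑ j, c i j * ‖x i - x j‖ ^ 2 = ∑ i, ∑ j, c i j * ‖x i‖ ^ 2
      - 2 * ∑ i, ∑ j, c i j * ⟪x i, x j⟫ + ∑ i, ∑ j, c i j * ‖x j‖ ^ 2 := by
    simp only [norm_sub_sq_real, Finset.mul_sum, ← Finset.sum_sub_distrib,
      ← Finset.sum_add_distrib]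
    exact Finset.sum_congr rfl fun i _ => Finset.sum_congr rfl fun j _ => by ring
  rw [hsplit, hleft, hright]
  ring

theorem sum_sum_mul_inner_le_of_norm_sub_le
    {E F : Type*} [NormedAddCommGroup E] [InnerProductSpace ℝ E]
    [NormedAddCommGroup F] [InnerProductSpace ℝ F]
    (c : ι → ι → ℝ) (hc : ∀ i j, c i j = c j i) (hrow : ∀ i, ∑ j, c i j = 0)
    (hoff : ∀ i j, i ≠ j → c i j ≤ 0) (d : ι → E) (e : ι → F)
    (hde : ∀ i j, ‖e i - e j‖ ≤ ‖d i - d j‖) :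
    ∑ i, ∑ j, c i j * ⟪e i, e j⟫ ≤ ∑ i, ∑ j, c i j * ⟪d i, d j⟫ := by
  rw [sum_sum_mul_inner_eq_neg_half_sum_sum_mul_norm_sub_sq c hc hrow,
    sum_sum_mul_inner_eq_neg_half_sum_sum_mul_norm_sub_sq c hc hrow]
  suffices ∑ i, ∑ j, c i j * ‖d i - d j‖ ^ 2 ≤ ∑ i, ∑ j, c i j * ‖e i - e j‖ ^ 2 by linarith
  refine Finset.sum_le_sum fun i _ => Finset.sum_le_sum fun j _ => ?_
  rcases eq_or_ne i j with rfl | hij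
  · simp
  · exact mul_le_mul_of_nonpos_left (by gcongr; exact hde i j) (hoff i j hij)

end QuadraticForm

section Frobenius

variable {ι κ μ : Type*} [Fintype ι] [Fintype κ] [Fintype μ]

theorem sum_sum_sq_sum_mul_eq_sum_sum_inner_mul_inner
    (u : ι → EuclideanSpace ℝ κ) (v : ι → EuclideanSpace ℝ μ) :
    ∑ k, ∑ l, (∑ i, u i k * v i l) ^ 2 = ∑ i, ∑ j, ⟪u i, u j⟫ * ⟪v i, v j⟫ := by
  calc _ = ∑ k, ∑ i, ∑ j, ∑ l, u i k * v i l * (u j k * v j l) := by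
        refine Finset.sum_congr rfl fun k _ => ?_
        simp only [sq, Finset.sum_mul_sum]
        rw [Finset.sum_comm]
        exact Finset.sum_congr rfl fun i _ => Finset.sum_comm
    _ = _ := by
        rw [Finset.sum_comm]
        refine Finset.sum_congr rfl fun i _ => ?_
        rw [Finset.sum_comm]
        refine Finset.sum_congr rfl fun j _ => ?_
        simp only [PiLp.inner_apply, RCLike.inner_apply, conj_trivial, Finset.sum_mul_sum]
        exact Finset.sum_congr rfl fun k _ => Finset.sum_congr rfl fun l _ => by ring

theorem sum_sum_sq_sum_smul_outer (a : ι → ℝ)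
    (x : ι → EuclideanSpace ℝ κ) (n : ι → EuclideanSpace ℝ μ) :
    ∑ k, ∑ l, ((∑ i, a i • Matrix.of fun p q => x i p * n i q) k l) ^ 2
      = ∑ i, ∑ j, a i * a j * ⟪n i, n j⟫ * ⟪x i, x j⟫ := by
  have hentry : ∀ k l, (∑ i, a i • Matrix.of fun p q => x i p * n i q) k l
      = ∑ i, (a i • x i) k * n i l := by
    simp [Matrix.sum_apply, mul_assoc]
  simp only [hentry, sum_sum_sq_sum_mul_eq_sum_sum_inner_mul_inner, real_inner_smul_left,
    real_inner_smul_right]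
  exact Finset.sum_congr rfl fun i _ => Finset.sum_congr rfl fun j _ => by ring

end Frobenius

/-- Cellwise normalization does not increase the reconstructed gradient: if the
weights `a i ≥ 0`, the normals satisfy `∑ i, a i • n i = 0` and are pairwise
non-obtuse, and the facet values `e` have pairwise distances no larger than
those of `d`, then the Frobenius norm of `∑ i, a i • (e i ⊗ n i)` is at most
that of `∑ i, a i • (d i ⊗ n i)`. -/
theorem frobenius_sum_smul_outer_le_of_dist_le
    (m N : ℕ) (a : Fin m → ℝ) (ha : ∀ i, 0 ≤ a i)
    (n : Fin m → EuclideanSpace ℝ (Fin N))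
    (hsum : ∑ i, a i • n i = 0)
    (hobtuse : ∀ i j, i ≠ j → ⟪n i, n j⟫ ≤ 0)
    (d e : Fin m → EuclideanSpace ℝ (Fin N))
    (hde : ∀ i j, ‖e i - e j‖ ≤ ‖d i - d j‖) :
    frobeniusNorm (∑ i, a i • (Matrix.of fun p q => e i p * n i q))
      ≤ frobeniusNorm (∑ i, a i • (Matrix.of fun p q => d i p * n i q)) := by
  have hsymm : ∀ i j, a i * a j * ⟪n i, n j⟫ = a j * a i * ⟪n j, n i⟫ := fun i j => by
    rw [real_inner_comm]; ring
  have hrow : ∀ i, ∑ j, a i * a j * ⟪n i, n j⟫ = 0 := fun i => by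
    simp_rw [mul_assoc, ← Finset.mul_sum, ← real_inner_smul_right, ← inner_sum, hsum,
      inner_zero_right, mul_zero]
  have hoff : ∀ i j, i ≠ j → a i * a j * ⟪n i, n j⟫ ≤ 0 := fun i j hij =>
    mul_nonpos_of_nonneg_of_nonpos (mul_nonneg (ha i) (ha j)) (hobtuse i j hij)
  refine Real.sqrt_le_sqrt ?_
  rw [sum_sum_sq_sum_smul_outer, sum_sum_sq_sum_smul_outer]
  exact sum_sum_mul_inner_le_of_norm_sub_le _ hsymm hrow hoff d e hde
end

section
/- Let E be a real inner product space and let a, b ∈ E satisfy ‖a‖ = 1 and ⟨a, b − a⟩ = 0. Then ‖b‖ ≥ 1 and ‖ b/‖b‖ − b ‖ ≤ ‖b − a‖². -/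
open scoped RealInnerProductSpace

/-- Pointwise projection-error estimate: if `‖a‖ = 1` and `⟨a, b - a⟩ = 0`,
then `‖b‖ ≥ 1` and the error of normalizing `b` is controlled quadratically,
`‖b/‖b‖ - b‖ ≤ ‖b - a‖²`. -/
theorem norm_normalize_sub_le_sq {E : Type*} [NormedAddCommGroup E] [InnerProductSpace ℝ E]
    (a b : E) (ha : ‖a‖ = 1) (hab : ⟪a, b - a⟫ = 0) :
    1 ≤ ‖b‖ ∧ ‖‖b‖⁻¹ • b - b‖ ≤ ‖b - a‖ ^ 2 := by
  have hpyth : ‖b‖ ^ 2 = 1 + ‖b - a‖ ^ 2 := by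
    have := norm_add_sq_real a (b - a)
    simp only [add_sub_cancel] at this
    rw [this, ha, hab]; ring
  have h1 : 1 ≤ ‖b‖ := by
    nlinarith [norm_nonneg b, sq_nonneg (‖b - a‖)]
  refine ⟨h1, ?_⟩
  have hb : ‖b‖ ≠ 0 := by positivity
  have : ‖‖b‖⁻¹ • b - b‖ = ‖b‖ - 1 := by
    rw [show ‖b‖⁻¹ • b - b = (‖b‖⁻¹ - 1) • b by rw [sub_smul, one_smul],
      norm_smul, Real.norm_eq_abs, abs_of_nonpos (by simp [inv_le_one_of_one_le₀ h1]),
      neg_sub, sub_mul, inv_mul_cancel₀ hb, one_mul]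
  rw [this]
  nlinarith
end

section
/- Let d, v, U ∈ ℝ³, let G be a real 3×3 matrix, and let M ∈ ℝ satisfy ‖d‖ ≤ 1 and ‖v‖ ≤ M. Then ‖U‖² − ⟨d × U, G v⟩ + (M²/4) ‖G‖_F² ≥ ‖ U + (1/2) • (d × (G v)) ‖² + (1/4) ⟨d, G v⟩², where G v denotes the matrix–vector product. -/
open scoped RealInnerProductSpace

/-- The cross product on Euclidean `ℝ³`. -/
noncomputable def cross3 (a b : EuclideanSpace ℝ (Fin 3)) : EuclideanSpace ℝ (Fin 3) :=
  (WithLp.equiv 2 (Fin 3 → ℝ)).symm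
    (crossProduct (WithLp.equiv 2 (Fin 3 → ℝ) a) (WithLp.equiv 2 (Fin 3 → ℝ) b))

/-- The matrix–vector product of a `3 × 3` matrix with a Euclidean vector. -/
noncomputable def matVec (G : Matrix (Fin 3) (Fin 3) ℝ) (v : EuclideanSpace ℝ (Fin 3)) :
    EuclideanSpace ℝ (Fin 3) :=
  (WithLp.equiv 2 (Fin 3 → ℝ)).symm (G.mulVec (WithLp.equiv 2 (Fin 3 → ℝ) v))

/-!
With `w = G v`, expanding the square on the right and using `⟨d × U, w⟩ = -⟨U, d × w⟩` cancels
the cross term, and Lagrange's identity `‖d × w‖² + ⟨d, w⟩² = ‖d‖² ‖w‖²` reduces the claim to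
`‖d‖² ‖w‖² ≤ M² ‖G‖_F²`, which follows from `‖d‖ ≤ 1`, `‖v‖ ≤ M` and the Cauchy–Schwarz bound
`‖G v‖ ≤ ‖G‖_F ‖v‖` applied row by row.
-/

theorem EuclideanSpace.real_inner_eq_dotProduct {ι : Type*} [Fintype ι]
    (x y : EuclideanSpace ℝ ι) : ⟪x, y⟫ = x.ofLp ⬝ᵥ y.ofLp := by
  rw [EuclideanSpace.inner_eq_star_dotProduct, star_trivial, dotProduct_comm]

theorem inner_cross3_left (a b c : EuclideanSpace ℝ (Fin 3)) :
    ⟪cross3 a b, c⟫ = -⟪b, cross3 a c⟫ := by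
  simp only [EuclideanSpace.real_inner_eq_dotProduct, cross3, WithLp.equiv_symm_apply,
    WithLp.equiv_apply]
  rw [← cross_anticomm c.ofLp, dotProduct_neg, neg_neg, triple_product_permutation b.ofLp,
    dotProduct_comm]

theorem norm_cross3_sq (a b : EuclideanSpace ℝ (Fin 3)) :
    ‖cross3 a b‖ ^ 2 = ‖a‖ ^ 2 * ‖b‖ ^ 2 - ⟪a, b⟫ ^ 2 := by
  simp only [← real_inner_self_eq_norm_sq, EuclideanSpace.real_inner_eq_dotProduct, cross3,
    WithLp.equiv_symm_apply, WithLp.equiv_apply, cross_dot_cross, dotProduct_comm b.ofLp a.ofLp]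
  ring

theorem EuclideanSpace.norm_toLp_mulVec_sq_le {m n : Type*} [Fintype m] [Fintype n]
    (G : Matrix m n ℝ) (v : EuclideanSpace ℝ n) :
    ‖WithLp.toLp 2 (G.mulVec v.ofLp)‖ ^ 2 ≤ ‖v‖ ^ 2 * ∑ k, ∑ l, G k l ^ 2 := by
  rw [EuclideanSpace.real_norm_sq_eq, EuclideanSpace.real_norm_sq_eq, Finset.mul_sum]
  refine Finset.sum_le_sum fun k _ => ?_
  rw [mul_comm]
  exact Finset.sum_mul_sq_le_sq_mul_sq _ (G k) v.ofLp

/-- Pointwise convexification of the Ericksen stress term: for `‖d‖ ≤ 1` and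
`‖v‖ ≤ M`, the quantity `‖U‖² - ⟨d × U, G v⟩ + (M²/4) ‖G‖_F²` dominates
`‖U + (1/2) d × (G v)‖² + (1/4) ⟨d, G v⟩²`. -/
theorem ericksen_pointwise_convexification
    (d v U : EuclideanSpace ℝ (Fin 3)) (G : Matrix (Fin 3) (Fin 3) ℝ) (M : ℝ)
    (hd : ‖d‖ ≤ 1) (hv : ‖v‖ ≤ M) :
    ‖U‖ ^ 2 - ⟪cross3 d U, matVec G v⟫ + (M ^ 2 / 4) * (∑ k, ∑ l, (G k l) ^ 2)
      ≥ ‖U + (1/2 : ℝ) • cross3 d (matVec G v)‖ ^ 2 + (1/4) * ⟪d, matVec G v⟫ ^ 2 := by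
  set w := matVec G v
  set F := ∑ k, ∑ l, (G k l) ^ 2
  have expand : ‖U + (1/2 : ℝ) • cross3 d w‖ ^ 2
      = ‖U‖ ^ 2 + ⟪U, cross3 d w⟫ + ‖cross3 d w‖ ^ 2 / 4 := by
    rw [norm_add_sq_real, real_inner_smul_right, norm_smul, Real.norm_of_nonneg (by norm_num)]
    ring
  have bound : ‖d‖ ^ 2 * ‖w‖ ^ 2 ≤ M ^ 2 * F :=
    calc ‖d‖ ^ 2 * ‖w‖ ^ 2 ≤ 1 * (‖v‖ ^ 2 * F) :=
          mul_le_mul (pow_le_one₀ (norm_nonneg d) hd)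
            (EuclideanSpace.norm_toLp_mulVec_sq_le G v) (sq_nonneg _) zero_le_one
      _ ≤ M ^ 2 * F := by rw [one_mul]; gcongr
  rw [expand, inner_cross3_left, norm_cross3_sq]
  linarith
end
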